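/- arXiv:2301.07275 — 2 statements merged into one kernel-verified Lean document; each statement's English description precedes it below -/
import Mathlib

section
/- Let F⁻¹ : [0,1] → ℝ be continuous and nondecreasing, let 0 = τ_0 < τ_1 < ... < τ_N = 1 and τ̂_i = (τ_i + τ_{i+1})/2. Define W(τ_1,...,τ_{N-1}) = ∑_{i=0}^{N-1} ∫_{τ_i}^{τ_{i+1}} |F⁻¹(θ) - F⁻¹(τ̂_i)| dθ. If F⁻¹ is differentiable at the relevant points, then ∂W/∂τ_i = 2F⁻¹(τ_i) - F⁻¹(τ̂_i) - F⁻¹(τ̂_{i-1}) for each interior index 1 ≤ i ≤ N-1. -/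
/-!
Monotonicity of `F⁻¹` removes the absolute value on each cell `[c, d]` with midpoint `m`: the
cell's loss is `∫_m^d F⁻¹ - ∫_c^m F⁻¹ = Φ c + Φ d - 2 Φ m` for a primitive `Φ` of `F⁻¹`, the
constants `±(m - c) F⁻¹(m)` cancelling because `m` is the midpoint. Moving `τ_i` changes only
the two cells adjacent to it, and by the fundamental theorem of calculus their derivatives in
`τ_i` are `F⁻¹(τ_i) - F⁻¹(τ̂_{i-1})` and `F⁻¹(τ_i) - F⁻¹(τ̂_i)`.
-/

open intervalIntegral MeasureTheory Set Filter Topology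

theorem integral_abs_sub_midpoint_of_monotoneOn {f : ℝ → ℝ} {c d : ℝ} (hcd : c ≤ d)
    (hf : MonotoneOn f (Icc c d)) :
    ∫ θ in c..d, |f θ - f ((c + d) / 2)| =
      (∫ θ in (c + d) / 2..d, f θ) - ∫ θ in c..(c + d) / 2, f θ := by
  have hcm : c ≤ (c + d) / 2 := by linarith
  have hmd : (c + d) / 2 ≤ d := by linarith
  set m := (c + d) / 2
  have hm : m ∈ Icc c d := ⟨hcm, hmd⟩
  have hf_cm : MonotoneOn f (uIcc c m) := hf.mono <| by
    rw [uIcc_of_le hcm]; exact Icc_subset_Icc_right hmd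
  have hf_md : MonotoneOn f (uIcc m d) := hf.mono <| by
    rw [uIcc_of_le hmd]; exact Icc_subset_Icc_left hcm
  have hint_cm := hf_cm.intervalIntegrable (μ := volume)
  have hint_md := hf_md.intervalIntegrable (μ := volume)
  have below : EqOn (fun θ => |f θ - f m|) (fun θ => f m - f θ) (uIcc c m) := by
    intro θ hθ
    rw [uIcc_of_le hcm] at hθ
    have : f θ ≤ f m := hf ⟨hθ.1, hθ.2.trans hmd⟩ hm hθ.2
    simp only [abs_of_nonpos (sub_nonpos.2 this), neg_sub]
  have above : EqOn (fun θ => |f θ - f m|) (fun θ => f θ - f m) (uIcc m d) := by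
    intro θ hθ
    rw [uIcc_of_le hmd] at hθ
    exact abs_of_nonneg (sub_nonneg.2 (hf hm ⟨hcm.trans hθ.1, hθ.2⟩ hθ.1))
  rw [← integral_add_adjacent_intervals (hint_cm.sub intervalIntegrable_const).abs
      (hint_md.sub intervalIntegrable_const).abs, integral_congr below, integral_congr above,
    integral_sub intervalIntegrable_const hint_cm, integral_sub hint_md intervalIntegrable_const]
  simp only [intervalIntegral.integral_const, smul_eq_mul]
  have : d - m = m - c := by ring
  rw [this]; ring

theorem integral_abs_sub_midpoint_eq_of_monotoneOn {f : ℝ → ℝ} {b c d : ℝ} (hcd : c ≤ d)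
    (hf : MonotoneOn f (Icc c d)) (hbc : IntervalIntegrable f volume b c) :
    ∫ θ in c..d, |f θ - f ((c + d) / 2)| =
      (∫ θ in b..c, f θ) + (∫ θ in b..d, f θ) - 2 * ∫ θ in b..(c + d) / 2, f θ := by
  have hcm : c ≤ (c + d) / 2 := by linarith
  have hcd' : IntervalIntegrable f volume c d :=
    (hf.mono (uIcc_of_le hcd).subset).intervalIntegrable
  have hcm' : IntervalIntegrable f volume c ((c + d) / 2) :=
    (hf.mono <| by
      rw [uIcc_of_le hcm]; exact Icc_subset_Icc_right (by linarith)).intervalIntegrable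
  rw [integral_abs_sub_midpoint_of_monotoneOn hcd hf,
    ← integral_interval_sub_left (hbc.trans hcd') (hbc.trans hcm'),
    ← integral_interval_sub_left (hbc.trans hcm') hbc]
  ring

theorem hasDerivAt_integral_of_continuousOn {f : ℝ → ℝ} {a b x : ℝ}
    (hf : ContinuousOn f (Icc a b)) (hx : x ∈ Ioo a b) :
    HasDerivAt (fun y => ∫ θ in a..y, f θ) (f x) x :=
  integral_hasDerivAt_right
    ((hf.mono (uIcc_of_le hx.1.le ▸ Icc_subset_Icc_right hx.2.le)).intervalIntegrable)
    ((hf.mono Ioo_subset_Icc_self).stronglyMeasurableAtFilter isOpen_Ioo x hx)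
    (hf.continuousAt (Icc_mem_nhds hx.1 hx.2))

theorem sum_range_update_eq {α M : Type*} [AddCommGroup M] (g : α → α → M) (τ : ℕ → α)
    {N i : ℕ} (hi : 0 < i) (hiN : i < N) (a : α) :
    ∑ j ∈ Finset.range N, g (Function.update τ i a j) (Function.update τ i a (j + 1)) =
      ∑ j ∈ Finset.range N, g (τ j) (τ (j + 1))
        + (g (τ (i - 1)) a - g (τ (i - 1)) (τ i)) + (g a (τ (i + 1)) - g (τ i) (τ (i + 1))) := by
  have hi' : i - 1 + 1 = i := Nat.sub_add_cancel hi
  have key := Finset.sum_eq_add_of_mem (i - 1) i (Finset.mem_range.2 (by omega))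
    (Finset.mem_range.2 hiN) (by omega)
    (f := fun j =>
      g (Function.update τ i a j) (Function.update τ i a (j + 1)) - g (τ j) (τ (j + 1)))
    (fun j _ hj => by
      simp only [Function.update_of_ne hj.2, Function.update_of_ne (show j + 1 ≠ i by omega),
        sub_self])
  simp only [Finset.sum_sub_distrib, hi', Function.update_self,
    Function.update_of_ne (show i - 1 ≠ i by omega),
    Function.update_of_ne (show i + 1 ≠ i by omega)] at key
  rw [sub_eq_iff_eq_add] at key
  rw [key]; abel

noncomputable def midpointLoss (f : ℝ → ℝ) (c d : ℝ) : ℝ :=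
  ∫ θ in c..d, |f θ - f ((c + d) / 2)|

section midpointLoss

variable {f : ℝ → ℝ} {p q x : ℝ}

theorem midpointLoss_eq_integral_sub {c d : ℝ} (hfc : ContinuousOn f (Icc p q))
    (hfm : MonotoneOn f (Icc p q)) (hc : p ≤ c) (hcd : c ≤ d) (hd : d ≤ q) :
    midpointLoss f c d =
      (∫ θ in p..c, f θ) + (∫ θ in p..d, f θ) - 2 * ∫ θ in p..(c + d) / 2, f θ :=
  integral_abs_sub_midpoint_eq_of_monotoneOn hcd (hfm.mono (Icc_subset_Icc hc hd))
    (hfc.mono (uIcc_of_le hc ▸ Icc_subset_Icc_right (hcd.trans hd))).intervalIntegrable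

theorem hasDerivAt_midpointLoss_right {c : ℝ} (hfc : ContinuousOn f (Icc p q))
    (hfm : MonotoneOn f (Icc p q)) (hc : p ≤ c) (hcx : c < x) (hx : x < q) :
    HasDerivAt (midpointLoss f c) (f x - f ((c + x) / 2)) x := by
  set Φ := fun y => ∫ θ in p..y, f θ
  have hΦx : HasDerivAt Φ (f x) x :=
    hasDerivAt_integral_of_continuousOn hfc ⟨hc.trans_lt hcx, hx⟩
  have hΦm : HasDerivAt Φ (f ((c + x) / 2)) ((c + x) / 2) :=
    hasDerivAt_integral_of_continuousOn hfc ⟨by linarith, by linarith⟩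
  have hmid : HasDerivAt (fun y => (c + y) / 2) (1 / 2) x := by
    simpa using ((hasDerivAt_id x).const_add c).div_const 2
  have hloc : midpointLoss f c =ᶠ[𝓝 x] fun y => Φ c + Φ y - 2 * Φ ((c + y) / 2) := by
    filter_upwards [Ioo_mem_nhds hcx hx] with y hy
    exact midpointLoss_eq_integral_sub hfc hfm hc hy.1.le hy.2.le
  refine HasDerivAt.congr_of_eventuallyEq ?_ hloc
  refine ((hΦx.const_add (Φ c)).sub ((hΦm.comp x hmid).const_mul 2)).congr_deriv ?_
  ring

theorem hasDerivAt_midpointLoss_left {d : ℝ} (hfc : ContinuousOn f (Icc p q))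
    (hfm : MonotoneOn f (Icc p q)) (hx : p < x) (hxd : x < d) (hd : d ≤ q) :
    HasDerivAt (fun y => midpointLoss f y d) (f x - f ((x + d) / 2)) x := by
  set Φ := fun y => ∫ θ in p..y, f θ
  have hΦx : HasDerivAt Φ (f x) x :=
    hasDerivAt_integral_of_continuousOn hfc ⟨hx, hxd.trans_le hd⟩
  have hΦm : HasDerivAt Φ (f ((x + d) / 2)) ((x + d) / 2) :=
    hasDerivAt_integral_of_continuousOn hfc ⟨by linarith, by linarith⟩
  have hmid : HasDerivAt (fun y => (y + d) / 2) (1 / 2) x := by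
    simpa using ((hasDerivAt_id x).add_const d).div_const 2
  have hloc : (fun y => midpointLoss f y d) =ᶠ[𝓝 x]
      fun y => Φ y + Φ d - 2 * Φ ((y + d) / 2) := by
    filter_upwards [Ioo_mem_nhds hx hxd] with y hy
    exact midpointLoss_eq_integral_sub hfc hfm hy.1.le hy.2.le hd
  refine HasDerivAt.congr_of_eventuallyEq ?_ hloc
  refine ((hΦx.add_const (Φ d)).sub ((hΦm.comp x hmid).const_mul 2)).congr_deriv ?_
  ring

end midpointLoss

theorem wasserstein_loss_fraction_derivative_general
    (N : ℕ) (i : ℕ) (hi1 : 1 ≤ i) (hiN : i ≤ N - 1)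
    (τ : ℕ → ℝ) (hτ0 : τ 0 = 0) (hτN : τ N = 1)
    (hmono : ∀ j < N, τ j < τ (j + 1))
    (Finv : ℝ → ℝ)
    (hFc : ContinuousOn Finv (Set.Icc 0 1))
    (hFm : MonotoneOn Finv (Set.Icc 0 1))
    (W : ℝ → ℝ)
    (hW : ∀ a, W a =
      ∑ j ∈ Finset.range N,
        ∫ θ in (Function.update τ i a j)..(Function.update τ i a (j + 1)),
          |Finv θ - Finv ((Function.update τ i a j + Function.update τ i a (j + 1)) / 2)|) :
    HasDerivAt W
      (2 * Finv (τ i) - Finv ((τ i + τ (i + 1)) / 2) - Finv ((τ (i - 1) + τ i) / 2))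
      (τ i) := by
  have hτ : StrictMonoOn τ (Iic N) := strictMonoOn_Iic_of_lt_succ hmono
  have h₀ : 0 ≤ τ (i - 1) :=
    hτ0 ▸ hτ.monotoneOn (mem_Iic.2 (Nat.zero_le N)) (mem_Iic.2 (by omega)) (Nat.zero_le _)
  have h₁ : τ (i - 1) < τ i := hτ (mem_Iic.2 (by omega)) (mem_Iic.2 (by omega)) (by omega)
  have h₂ : τ i < τ (i + 1) := hτ (mem_Iic.2 (by omega)) (mem_Iic.2 (by omega)) (by omega)
  have h₃ : τ (i + 1) ≤ 1 :=
    hτN ▸ hτ.monotoneOn (mem_Iic.2 (by omega)) (mem_Iic.2 le_rfl) (by omega)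
  have hW' : W = fun a => ∑ j ∈ Finset.range N, midpointLoss Finv (τ j) (τ (j + 1))
      + (midpointLoss Finv (τ (i - 1)) a - midpointLoss Finv (τ (i - 1)) (τ i))
      + (midpointLoss Finv a (τ (i + 1)) - midpointLoss Finv (τ i) (τ (i + 1))) :=
    funext fun a =>
      (hW a).trans (sum_range_update_eq (midpointLoss Finv) τ (by omega) (by omega) a)
  have hleft := hasDerivAt_midpointLoss_right hFc hFm h₀ h₁ (h₂.trans_le h₃)
  have hright := hasDerivAt_midpointLoss_left hFc hFm (h₀.trans_lt h₁) h₂ h₃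
  rw [hW']
  refine (((hleft.sub_const _).const_add _).add (hright.sub_const _)).congr_deriv ?_
  ring

theorem wasserstein_loss_fraction_derivative
    (N : ℕ) (i : ℕ) (hi1 : 1 ≤ i) (hiN : i ≤ N - 1) (hN : 1 ≤ N)
    (τ : ℕ → ℝ) (hτ0 : τ 0 = 0) (hτN : τ N = 1)
    (hmono : ∀ j < N, τ j < τ (j + 1))
    (Finv : ℝ → ℝ)
    (hFc : ContinuousOn Finv (Set.Icc 0 1))
    (hFm : MonotoneOn Finv (Set.Icc 0 1))
    (hFd1 : DifferentiableAt ℝ Finv ((τ (i - 1) + τ i) / 2))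
    (hFd2 : DifferentiableAt ℝ Finv ((τ i + τ (i + 1)) / 2))
    (W : ℝ → ℝ)
    (hW : ∀ a, W a =
      ∑ j ∈ Finset.range N,
        ∫ θ in (Function.update τ i a j)..(Function.update τ i a (j + 1)),
          |Finv θ - Finv ((Function.update τ i a j + Function.update τ i a (j + 1)) / 2)|) :
    HasDerivAt W
      (2 * Finv (τ i) - Finv ((τ i + τ (i + 1)) / 2) - Finv ((τ (i - 1) + τ i) / 2))
      (τ i) :=
  wasserstein_loss_fraction_derivative_general N i hi1 hiN τ hτ0 hτN hmono Finv hFc hFm W hW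
end

section
/- Let F⁻¹ be nondecreasing and continuous on [τ_i, τ_{i+1}]. Then the function c ↦ ∫_{τ_i}^{τ_{i+1}} |F⁻¹(θ) - c| dθ over c in the range of F⁻¹ is minimized at c = F⁻¹((τ_i + τ_{i+1})/2) among values c = F⁻¹(τ̂) with τ̂ ∈ [τ_i, τ_{i+1}]. -/
/-!
The median of a distribution minimizes its expected absolute deviation. If `f` is at most `c`
on the lower half of `[a, b]` and `c ≤ d`, then moving the centre from `c` to `d` increases
`|f - c|` by exactly `d - c` on the lower half, and decreases it by at most `d - c` on the upper
half; the two halves have equal length, so the integral cannot decrease. For a monotone `f`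
and `c = f ((a + b) / 2)`, this covers every `d = f τ` with `τ` above the midpoint; the case of
`τ` below it follows by reflecting `[a, b]` and negating `f`.
-/

open intervalIntegral Set
open MeasureTheory (volume)

section

variable {f : ℝ → ℝ} {a b c d : ℝ}

lemma integral_abs_sub_le_of_le_on_lower_half (hab : a ≤ b)
    (hf : IntervalIntegrable f volume a b) (hcd : c ≤ d)
    (hfc : ∀ θ ∈ Icc a ((a + b) / 2), f θ ≤ c) :
    ∫ θ in a..b, |f θ - c| ≤ ∫ θ in a..b, |f θ - d| := by
  set m := (a + b) / 2 with hm
  have ham : a ≤ m := by rw [hm]; linarith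
  have hmb : m ≤ b := by rw [hm]; linarith
  have hm_mem : m ∈ uIcc a b := mem_uIcc.2 (Or.inl ⟨ham, hmb⟩)
  have hg : ∀ {u v : ℝ}, uIcc u v ⊆ uIcc a b →
      IntervalIntegrable (fun θ => |f θ - c| - |f θ - d|) volume u v := fun huv =>
    ((hf.sub intervalIntegrable_const).abs.sub (hf.sub intervalIntegrable_const).abs).mono_set huv
  have lower : ∫ θ in a..m, (|f θ - c| - |f θ - d|) = (m - a) * (c - d) := by
    rw [integral_congr (g := fun _ => c - d), integral_const, smul_eq_mul]
    intro θ hθ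
    rw [uIcc_of_le ham] at hθ
    have hfθ := hfc θ hθ
    simp only [abs_of_nonpos (sub_nonpos.2 hfθ), abs_of_nonpos (sub_nonpos.2 (hfθ.trans hcd))]
    ring
  have upper : ∫ θ in m..b, (|f θ - c| - |f θ - d|) ≤ (b - m) * (d - c) := by
    rw [← smul_eq_mul, ← integral_const]
    refine integral_mono_on hmb (hg (uIcc_subset_uIcc_right hm_mem)) intervalIntegrable_const
      fun θ _ => ?_
    calc |f θ - c| - |f θ - d| ≤ |(f θ - c) - (f θ - d)| := abs_sub_abs_le_abs_sub _ _
      _ = d - c := by rw [sub_sub_sub_cancel_left, abs_of_nonneg (sub_nonneg.2 hcd)]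
  have diff_nonpos : ∫ θ in a..b, (|f θ - c| - |f θ - d|) ≤ 0 := by
    rw [← integral_add_adjacent_intervals (hg (uIcc_subset_uIcc_left hm_mem))
      (hg (uIcc_subset_uIcc_right hm_mem)), lower]
    have halves_cancel : (m - a) * (c - d) + (b - m) * (d - c) = 0 := by rw [hm]; ring
    linarith
  rw [integral_sub (hf.sub intervalIntegrable_const).abs (hf.sub intervalIntegrable_const).abs]
    at diff_nonpos
  linarith

lemma integral_abs_sub_le_of_le_on_upper_half (hab : a ≤ b)
    (hf : IntervalIntegrable f volume a b) (hdc : d ≤ c)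
    (hfc : ∀ θ ∈ Icc ((a + b) / 2) b, c ≤ f θ) :
    ∫ θ in a..b, |f θ - c| ≤ ∫ θ in a..b, |f θ - d| := by
  have reflect : ∀ e, ∫ θ in a..b, |-f (a + b - θ) - -e| = ∫ θ in a..b, |f θ - e| := fun e => by
    simp only [neg_sub_neg, abs_sub_comm e]
    rw [integral_comp_sub_left (fun θ => |f θ - e|), add_sub_cancel_right, add_sub_cancel_left]
  rw [← reflect c, ← reflect d]
  refine integral_abs_sub_le_of_le_on_lower_half hab ?_ (neg_le_neg hdc) fun θ hθ => ?_
  · have := (hf.comp_sub_left (a + b)).neg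
    rw [add_sub_cancel_right, add_sub_cancel_left] at this
    exact this.symm
  · exact neg_le_neg (hfc _ ⟨by linarith [hθ.2], by linarith [hθ.1]⟩)

end

theorem midpoint_minimizes_interval_wasserstein
    (τi τi1 : ℝ) (h : τi < τi1)
    (Finv : ℝ → ℝ)
    (hFc : ContinuousOn Finv (Set.Icc τi τi1))
    (hFm : MonotoneOn Finv (Set.Icc τi τi1)) :
    ∀ τhat ∈ Set.Icc τi τi1,
      (∫ θ in τi..τi1, |Finv θ - Finv ((τi + τi1) / 2)|) ≤
        ∫ θ in τi..τi1, |Finv θ - Finv τhat| := by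
  intro τhat hτhat
  have hint : IntervalIntegrable Finv volume τi τi1 :=
    (uIcc_of_le h.le ▸ hFc).intervalIntegrable
  have hmid : (τi + τi1) / 2 ∈ Icc τi τi1 := ⟨by linarith, by linarith⟩
  rcases le_total ((τi + τi1) / 2) τhat with hle | hle
  · exact integral_abs_sub_le_of_le_on_lower_half h.le hint (hFm hmid hτhat hle)
      fun θ hθ => hFm ⟨hθ.1, hθ.2.trans hmid.2⟩ hmid hθ.2
  · exact integral_abs_sub_le_of_le_on_upper_half h.le hint (hFm hτhat hmid hle)
      fun θ hθ => hFm hmid ⟨hmid.1.trans hθ.1, hθ.2⟩ hθ.1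
end
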